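/- Let n ≥ 2, m ≥ n, and let i, j, k, l ∈ {1,…,n} with i < j and k < l. Then Z_m^i ∩ Z_m^j ⊆ Z_m^k ∩ Z_m^l if and only if i ≤ k < l ≤ j (equivalently, √(I_m^k + I_m^l) ⊆ √(I_m^i + I_m^j) if and only if i ≤ k and l ≤ j). In particular, Z_m^i ∩ Z_m^j is maximal for inclusion among { Z_m^k ∩ Z_m^l : k ≠ l } if and only if j − i = 1. -/
import Mathlib


noncomputable section

open MvPolynomial

/-- `R N = ℂ[x_0,…,x_N, y_0,…,y_N, z_0,…,z_N]`. -/
abbrev R (N : ℕ) : Type := MvPolynomial (Fin 3 × Fin (N + 1)) ℂ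

/-- the variable `x_i` (for `i ≤ N`). -/
def Xv (N i : ℕ) : R N := if h : i < N + 1 then X (0, ⟨i, h⟩) else 0
/-- the variable `y_i` (for `i ≤ N`). -/
def Yv (N i : ℕ) : R N := if h : i < N + 1 then X (1, ⟨i, h⟩) else 0
/-- the variable `z_i` (for `i ≤ N`). -/
def Zv (N i : ℕ) : R N := if h : i < N + 1 then X (2, ⟨i, h⟩) else 0

/-- `Σ_{i=p}^N x_i t^i`. -/
def xSer (N p : ℕ) : Polynomial (R N) :=
  ∑ i ∈ Finset.Icc p N, Polynomial.C (Xv N i) * Polynomial.X ^ i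
/-- `Σ_{i=q}^N y_i t^i`. -/
def ySer (N q : ℕ) : Polynomial (R N) :=
  ∑ i ∈ Finset.Icc q N, Polynomial.C (Yv N i) * Polynomial.X ^ i
/-- `Σ_{i=r}^N z_i t^i`. -/
def zSer (N r : ℕ) : Polynomial (R N) :=
  ∑ i ∈ Finset.Icc r N, Polynomial.C (Zv N i) * Polynomial.X ^ i

/-- `f_{pqr}^{(j)}`: the coefficient of `t^j` in
`f(Σ_{i=p}^N x_i t^i, Σ_{i=q}^N y_i t^i, Σ_{i=r}^N z_i t^i)` where `f = xy - z^{n+1}`. -/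
def fpqr (N n p q r j : ℕ) : R N :=
  (xSer N p * ySer N q - zSer N r ^ (n + 1)).coeff j


/-- The ideal `L_{pqr} = ⟨x_0,…,x_{p−1}, y_0,…,y_{q−1}, z_0,…,z_{r−1}⟩`. -/
def Lpqr (N p q r : ℕ) : Ideal (R N) :=
  Ideal.span ((Xv N '' Set.Iio p) ∪ (Yv N '' Set.Iio q) ∪ (Zv N '' Set.Iio r))

/-- The substitution `x_i ↦ x_{l+i}`, `y_i ↦ y_{e(n+1)−l+i}`, `z_i ↦ z_{e+i}`. -/
def shiftSub (N n l e : ℕ) : Fin 3 × Fin (N + 1) → R N := fun v =>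
  if v.1 = 0 then Xv N (l + (v.2 : ℕ))
  else if v.1 = 1 then Yv N (e * (n + 1) - l + (v.2 : ℕ))
  else Zv N (e + (v.2 : ℕ))

/-- `g_{l,e}^{(j)}`: obtained from `f^{(j)} = f_{000}^{(j)}` by the substitution
`x_i ↦ x_{l+i}`, `y_i ↦ y_{e(n+1)−l+i}`, `z_i ↦ z_{e+i}`. -/
def gle (N n l e j : ℕ) : R N := aeval (shiftSub N n l e) (fpqr N n 0 0 0 j)

/-- The ideal `⟨f^{(0)},…,f^{(m)}⟩` of `R_m`. -/
def Fideal (m n : ℕ) : Ideal (R m) :=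
  Ideal.span {g | ∃ j ≤ m, g = fpqr m n 0 0 0 j}

/-- `I_m^l = L_{l,n+1−l,1} + ⟨f^{(0)},…,f^{(m)}⟩`. -/
def Iml (m n l : ℕ) : Ideal (R m) := Lpqr m l (n + 1 - l) 1 ⊔ Fideal m n

/-- `G_m^l = ⟨g_{l,1}^{(0)},…,g_{l,1}^{(m−n−1)}⟩` (the zero ideal when `m = n`). -/
def Gml (m n l : ℕ) : Ideal (R m) :=
  Ideal.span {g | ∃ j < m - n, g = gle m n l 1 j}

/-- Points of `ℂ^{3(m+1)}`. -/
abbrev Pt (m : ℕ) := Fin 3 × Fin (m + 1) → ℂ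

/-- The zero locus in `ℂ^{3(m+1)}` of an ideal of `R_m`. -/
def zl (m : ℕ) (I : Ideal (R m)) : Set (Pt m) := {x | ∀ g ∈ I, eval x g = 0}

/-- `Z_m^l ⊆ ℂ^{3(m+1)}`, the zero locus of `I_m^l`. -/
def Zml (m n l : ℕ) : Set (Pt m) := zl m (Iml m n l)

/-- A subset of `ℂ^{3(m+1)}` is irreducible with respect to the Zariski topology,
whose closed sets are exactly the zero loci of ideals of `R_m`. -/
def IsIrredSet (m : ℕ) (S : Set (Pt m)) : Prop :=
  S.Nonempty ∧
    ∀ I₁ I₂ : Ideal (R m), S ⊆ zl m I₁ ∪ zl m I₂ → S ⊆ zl m I₁ ∨ S ⊆ zl m I₂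

/-! ### Auxiliary lemmas -/

lemma eval_Xv (m : ℕ) (x : Pt m) (s : ℕ) :
    eval x (Xv m s) = if h : s < m + 1 then x (0, ⟨s, h⟩) else 0 := by
  unfold Xv; split <;> simp

lemma eval_Yv (m : ℕ) (x : Pt m) (s : ℕ) :
    eval x (Yv m s) = if h : s < m + 1 then x (1, ⟨s, h⟩) else 0 := by
  unfold Yv; split <;> simp

lemma eval_Zv (m : ℕ) (x : Pt m) (s : ℕ) :
    eval x (Zv m s) = if h : s < m + 1 then x (2, ⟨s, h⟩) else 0 := by
  unfold Zv; split <;> simp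

lemma Xv_mem_L {N a b c s : ℕ} (h : s < a) : Xv N s ∈ Lpqr N a b c :=
  Ideal.subset_span (Or.inl (Or.inl ⟨s, h, rfl⟩))

lemma Yv_mem_L {N a b c s : ℕ} (h : s < b) : Yv N s ∈ Lpqr N a b c :=
  Ideal.subset_span (Or.inl (Or.inr ⟨s, h, rfl⟩))

lemma Zv_mem_L {N a b c s : ℕ} (h : s < c) : Zv N s ∈ Lpqr N a b c :=
  Ideal.subset_span (Or.inr ⟨s, h, rfl⟩)

lemma zl_anti {m : ℕ} {I J : Ideal (R m)} (h : I ≤ J) : zl m J ⊆ zl m I :=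
  fun x hx g hg => hx g (h hg)

lemma zl_sup {m : ℕ} (I J : Ideal (R m)) : zl m (I ⊔ J) = zl m I ∩ zl m J := by
  apply Set.Subset.antisymm
  · intro x hx
    exact ⟨fun g hg => hx g (Ideal.mem_sup_left hg),
           fun g hg => hx g (Ideal.mem_sup_right hg)⟩
  · rintro x ⟨h1, h2⟩ g hg
    have hker : I ⊔ J ≤ RingHom.ker (eval x) :=
      sup_le (fun a ha => RingHom.mem_ker.mpr (h1 a ha))
             (fun a ha => RingHom.mem_ker.mpr (h2 a ha))
    exact RingHom.mem_ker.mp (hker hg)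

lemma zl_radical {m : ℕ} (I : Ideal (R m)) : zl m I.radical = zl m I := by
  apply Set.Subset.antisymm
  · exact zl_anti Ideal.le_radical
  · intro x hx g hg
    obtain ⟨c, hc⟩ := Ideal.mem_radical_iff.mp hg
    have h0 : (eval x g) ^ c = 0 := by rw [← map_pow]; exact hx _ hc
    rcases Nat.eq_zero_or_pos c with rfl | hcpos
    · simp at h0
    · exact (pow_eq_zero_iff (by omega)).mp h0

lemma Iml_le_sup {m n i j p : ℕ} (h1 : i ≤ p) (h2 : p ≤ j) :
    Iml m n p ≤ Iml m n i ⊔ Iml m n j := by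
  rw [Iml]
  apply sup_le
  · rw [Lpqr, Ideal.span_le]
    rintro g ((⟨s, hs, rfl⟩ | ⟨s, hs, rfl⟩) | ⟨s, hs, rfl⟩)
    · have hs' : s < p := hs
      exact Ideal.mem_sup_right (Ideal.mem_sup_left (Xv_mem_L (by omega)))
    · have hs' : s < n + 1 - p := hs
      exact Ideal.mem_sup_left (Ideal.mem_sup_left (Yv_mem_L (by omega)))
    · have hs' : s < 1 := hs
      exact Ideal.mem_sup_left (Ideal.mem_sup_left (Zv_mem_L hs'))
  · exact le_trans (le_sup_right : Fideal m n ≤ Iml m n i) le_sup_left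

lemma map_xSer_zero {m : ℕ} {x : Pt m} (h : ∀ i : Fin (m + 1), x (0, i) = 0) :
    (xSer m 0).map (eval x) = 0 := by
  rw [xSer, Polynomial.map_sum]
  apply Finset.sum_eq_zero
  intro i hi
  have hi' : i < m + 1 := by
    have := (Finset.mem_Icc.mp hi).2; omega
  rw [Polynomial.map_mul, Polynomial.map_C, eval_Xv, dif_pos hi', h]
  simp

lemma map_ySer_zero {m : ℕ} {x : Pt m} (h : ∀ i : Fin (m + 1), x (1, i) = 0) :
    (ySer m 0).map (eval x) = 0 := by
  rw [ySer, Polynomial.map_sum]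
  apply Finset.sum_eq_zero
  intro i hi
  have hi' : i < m + 1 := by
    have := (Finset.mem_Icc.mp hi).2; omega
  rw [Polynomial.map_mul, Polynomial.map_C, eval_Yv, dif_pos hi', h]
  simp

lemma map_zSer_zero {m : ℕ} {x : Pt m} (h : ∀ i : Fin (m + 1), x (2, i) = 0) :
    (zSer m 0).map (eval x) = 0 := by
  rw [zSer, Polynomial.map_sum]
  apply Finset.sum_eq_zero
  intro i hi
  have hi' : i < m + 1 := by
    have := (Finset.mem_Icc.mp hi).2; omega
  rw [Polynomial.map_mul, Polynomial.map_C, eval_Zv, dif_pos hi', h]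
  simp

lemma eval_fpqr_zero {m n : ℕ} {x : Pt m}
    (hz : ∀ i : Fin (m + 1), x (2, i) = 0)
    (h : (∀ i : Fin (m + 1), x (0, i) = 0) ∨ (∀ i : Fin (m + 1), x (1, i) = 0))
    (j : ℕ) : eval x (fpqr m n 0 0 0 j) = 0 := by
  have hmap : (xSer m 0 * ySer m 0 - zSer m 0 ^ (n + 1)).map (eval x) = 0 := by
    rw [Polynomial.map_sub, Polynomial.map_mul, Polynomial.map_pow, map_zSer_zero hz,
      zero_pow (Nat.succ_ne_zero n), sub_zero]
    rcases h with h | h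
    · rw [map_xSer_zero h, zero_mul]
    · rw [map_ySer_zero h, mul_zero]
  rw [fpqr, ← Polynomial.coeff_map, hmap, Polynomial.coeff_zero]

lemma mem_Zml_of {m n p : ℕ} {x : Pt m}
    (hx : ∀ s < p, eval x (Xv m s) = 0)
    (hy : ∀ s < n + 1 - p, eval x (Yv m s) = 0)
    (hz : eval x (Zv m 0) = 0)
    (hf : ∀ j, eval x (fpqr m n 0 0 0 j) = 0) :
    x ∈ Zml m n p := by
  have key : Iml m n p ≤ RingHom.ker (eval x) := by
    rw [Iml]
    apply sup_le
    · rw [Lpqr, Ideal.span_le]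
      rintro g ((⟨s, hs, rfl⟩ | ⟨s, hs, rfl⟩) | ⟨s, hs, rfl⟩)
      · exact RingHom.mem_ker.mpr (hx s hs)
      · exact RingHom.mem_ker.mpr (hy s hs)
      · have hs' : s < 1 := hs
        obtain rfl : s = 0 := by omega
        exact RingHom.mem_ker.mpr hz
    · rw [Fideal, Ideal.span_le]
      rintro g ⟨j, _, rfl⟩
      exact RingHom.mem_ker.mpr (hf j)
  intro g hg
  exact RingHom.mem_ker.mp (key hg)

/-- The point with `x_s = 1` and all other coordinates `0`. -/
def ptX (m s : ℕ) : Pt m := fun v => if v.1 = 0 ∧ (v.2 : ℕ) = s then 1 else 0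
/-- The point with `y_s = 1` and all other coordinates `0`. -/
def ptY (m s : ℕ) : Pt m := fun v => if v.1 = 1 ∧ (v.2 : ℕ) = s then 1 else 0

lemma ptX_mem (m n p s : ℕ) (hps : p ≤ s) : ptX m s ∈ Zml m n p := by
  have hy : ∀ i : Fin (m + 1), ptX m s (1, i) = 0 := by intro i; simp [ptX]
  have hz : ∀ i : Fin (m + 1), ptX m s (2, i) = 0 := by intro i; simp [ptX]
  apply mem_Zml_of
  · intro t ht
    rw [eval_Xv]
    split
    · have : t ≠ s := by omega
      simp [ptX, this]
    · rfl
  · intro t _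
    rw [eval_Yv]; split <;> simp [ptX]
  · rw [eval_Zv]; split <;> simp [ptX]
  · exact eval_fpqr_zero hz (Or.inr hy)

lemma ptX_not_mem (m n p s : ℕ) (hsp : s < p) (hsm : s ≤ m) : ptX m s ∉ Zml m n p := by
  intro h
  have hmem : Xv m s ∈ Iml m n p := Ideal.mem_sup_left (Xv_mem_L hsp)
  have h1 := h _ hmem
  rw [eval_Xv, dif_pos (by omega : s < m + 1)] at h1
  simp [ptX] at h1

lemma ptY_mem (m n p s : ℕ) (hps : n + 1 - p ≤ s) : ptY m s ∈ Zml m n p := by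
  have hx : ∀ i : Fin (m + 1), ptY m s (0, i) = 0 := by intro i; simp [ptY]
  have hz : ∀ i : Fin (m + 1), ptY m s (2, i) = 0 := by intro i; simp [ptY]
  apply mem_Zml_of
  · intro t _
    rw [eval_Xv]; split <;> simp [ptY]
  · intro t ht
    rw [eval_Yv]
    split
    · have : t ≠ s := by omega
      simp [ptY, this]
    · rfl
  · rw [eval_Zv]; split <;> simp [ptY]
  · exact eval_fpqr_zero hz (Or.inl hx)

lemma ptY_not_mem (m n p s : ℕ) (hsp : s < n + 1 - p) (hsm : s ≤ m) : ptY m s ∉ Zml m n p := by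
  intro h
  have hmem : Yv m s ∈ Iml m n p := Ideal.mem_sup_left (Yv_mem_L hsp)
  have h1 := h _ hmem
  rw [eval_Yv, dif_pos (by omega : s < m + 1)] at h1
  simp [ptY] at h1

lemma incl_iff (n m : ℕ) (hm : n ≤ m) (i j k l : ℕ)
    (hi : 1 ≤ i) (hij : i < j) (hj : j ≤ n) (hk : 1 ≤ k) (hkl : k ≤ l) (hl : l ≤ n) :
    Zml m n i ∩ Zml m n j ⊆ Zml m n k ∩ Zml m n l ↔ (i ≤ k ∧ l ≤ j) := by
  constructor
  · intro hsub
    constructor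
    · by_contra hik
      push_neg at hik
      have hmem : ptY m (n + 1 - i) ∈ Zml m n i ∩ Zml m n j :=
        ⟨ptY_mem _ _ _ _ le_rfl, ptY_mem _ _ _ _ (by omega)⟩
      exact ptY_not_mem m n k (n + 1 - i) (by omega) (by omega) (hsub hmem).1
    · by_contra hlj
      push_neg at hlj
      have hmem : ptX m j ∈ Zml m n i ∩ Zml m n j :=
        ⟨ptX_mem _ _ _ _ hij.le, ptX_mem _ _ _ _ le_rfl⟩
      exact ptX_not_mem m n l j hlj (by omega) (hsub hmem).2
  · rintro ⟨h1, h2⟩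
    have hIdeal : Iml m n k ⊔ Iml m n l ≤ Iml m n i ⊔ Iml m n j :=
      sup_le (Iml_le_sup h1 (hkl.trans h2)) (Iml_le_sup (h1.trans hkl) h2)
    have hzl : zl m (Iml m n i ⊔ Iml m n j) ⊆ zl m (Iml m n k ⊔ Iml m n l) :=
      zl_anti hIdeal
    rw [zl_sup, zl_sup] at hzl
    exact hzl

/- STATEMENT 12: for `n ≥ 2`, `m ≥ n`, `i < j` and `k < l` in `{1,…,n}`:
`Z_m^i ∩ Z_m^j ⊆ Z_m^k ∩ Z_m^l ↔ i ≤ k < l ≤ j`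
(equivalently `√(I_m^k + I_m^l) ⊆ √(I_m^i + I_m^j) ↔ i ≤ k ∧ l ≤ j`);
in particular `Z_m^i ∩ Z_m^j` is maximal for inclusion among
`{Z_m^k ∩ Z_m^l : k ≠ l}` iff `j − i = 1`. -/
theorem stmt12 (n m : ℕ) (hn : 2 ≤ n) (hm : n ≤ m) (i j k l : ℕ)
    (hi : 1 ≤ i) (hij : i < j) (hj : j ≤ n)
    (hk : 1 ≤ k) (hkl : k < l) (hl : l ≤ n) :
    (Zml m n i ∩ Zml m n j ⊆ Zml m n k ∩ Zml m n l ↔ (i ≤ k ∧ l ≤ j)) ∧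
    ((Iml m n k ⊔ Iml m n l).radical ≤ (Iml m n i ⊔ Iml m n j).radical ↔ (i ≤ k ∧ l ≤ j)) ∧
    ((∀ k' l', 1 ≤ k' → 1 ≤ l' → k' ≤ n → l' ≤ n → k' ≠ l' →
        Zml m n i ∩ Zml m n j ⊆ Zml m n k' ∩ Zml m n l' →
        Zml m n i ∩ Zml m n j = Zml m n k' ∩ Zml m n l') ↔ j = i + 1) := by
  have P1 : ∀ k' l', 1 ≤ k' → k' ≤ l' → l' ≤ n →
      (Zml m n i ∩ Zml m n j ⊆ Zml m n k' ∩ Zml m n l' ↔ (i ≤ k' ∧ l' ≤ j)) :=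
    fun k' l' a b c => incl_iff n m hm i j k' l' hi hij hj a b c
  refine ⟨P1 k l hk hkl.le hl, ?_, ?_⟩
  · constructor
    · intro hrad
      apply (P1 k l hk hkl.le hl).mp
      have h1 : zl m (Iml m n i ⊔ Iml m n j) ⊆ zl m (Iml m n k ⊔ Iml m n l) := by
        calc zl m (Iml m n i ⊔ Iml m n j)
            = zl m (Iml m n i ⊔ Iml m n j).radical := (zl_radical _).symm
          _ ⊆ zl m (Iml m n k ⊔ Iml m n l).radical := zl_anti hrad
          _ = zl m (Iml m n k ⊔ Iml m n l) := zl_radical _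
      rw [zl_sup, zl_sup] at h1
      exact h1
    · rintro ⟨h1, h2⟩
      exact Ideal.radical_mono
        (sup_le (Iml_le_sup h1 (hkl.le.trans h2)) (Iml_le_sup (h1.trans hkl.le) h2))
  · constructor
    · intro hmax
      by_contra hne
      have hij2 : i + 1 < j := by omega
      have heq := hmax i (i + 1) hi (by omega) (by omega) (by omega) (by omega)
        ((P1 i (i + 1) hi (by omega) (by omega)).mpr ⟨le_rfl, by omega⟩)
      have hpt : ptX m (i + 1) ∈ Zml m n i ∩ Zml m n (i + 1) :=
        ⟨ptX_mem _ _ _ _ (by omega), ptX_mem _ _ _ _ le_rfl⟩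
      rw [← heq] at hpt
      exact ptX_not_mem m n j (i + 1) hij2 (by omega) hpt.2
    · intro hji k' l' hk' hl' hk'n hl'n hne hsub
      rcases Nat.lt_or_ge k' l' with h | h
      · obtain ⟨ha, hb⟩ := (P1 k' l' hk' h.le hl'n).mp hsub
        have hc : k' = i ∧ l' = j := by omega
        rw [hc.1, hc.2]
      · have h' : l' < k' := by omega
        have hsub' : Zml m n i ∩ Zml m n j ⊆ Zml m n l' ∩ Zml m n k' := by
          rw [Set.inter_comm (Zml m n l')]; exact hsub
        obtain ⟨ha, hb⟩ := (P1 l' k' hl' h'.le hk'n).mp hsub'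
        have hc : l' = i ∧ k' = j := by omega
        rw [hc.1, hc.2]
        exact Set.inter_comm _ _

end
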